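/- Let 0 < α < 1/2 and let 2α < γ < 1. Assume the localization estimate: there exist constants C, c > 0 such that for all N and all x, y ∈ {1,…,N}, 𝖤( Σ_{k ∈ I(α)} |ψ^k_x ψ^k_y| ) ≤ C e^{−c|x−y|/N^{2α}}, where I(α) = (N^{1−α}, N−1] ∩ ℤ. Then, almost surely, there exists N₀ ∈ ℕ such that for all N ≥ N₀ and for all k ∈ I(α), there exists an interval J(k) ⊂ ℝ with |J(k)| ≤ 2N^γ such that |ψ^k_x| ≤ N^{−1/γ} for all x ∈ {1,…,N} \\ J(k). -/

import Mathlib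

open Finset Filter MeasureTheory ProbabilityTheory

/-!
Markov's inequality and a union bound over pairs of sites turn the localization estimate into
the bound `C N^(2 + 2/γ) exp (-c N^(γ - 2α))` for the probability that some high mode exceeds
`N^(-1/γ)` at two sites more than `N^γ` apart. These bounds are summable, so by Borel–Cantelli
almost surely this happens for only finitely many `N`; otherwise every high mode is small
outside the `N^γ`-neighbourhood of any site where it is large.

Markov's inequality needs the integrand to be measurable. An eigenvector is a multiple of the
solution of the recurrence started at `p 0 = p 1 = 1`, so `ψ^k_x ψ^k_y` is a rational function
of the masses and of `ω_k²`, and `ω_k²` is recovered from the measurable traces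
`tr (M⁻¹(−Δ))ⁿ = Σ_k ω_k^(2n)` as a limit of `(Σ_{i ≤ k} ω_i^(2n))^(1/n)`.
-/

/-- Eigenmodes of the operator `M⁻¹(−Δ)` with free boundary conditions
(`ψ_0 = ψ_1`, `ψ_{N+1} = ψ_N`), normalized by `⟨ψ^j, Mψ^k⟩ = δ_{jk}`, with `ω_0 = 0` and
`ω_k > 0` for `1 ≤ k ≤ N−1`. -/
def IsEigenSystem (N : ℕ) (m : ℕ → ℝ) (ψ : ℕ → ℕ → ℝ) (W : ℕ → ℝ) : Prop :=
  (∀ k ≤ N - 1, ψ k 0 = ψ k 1 ∧ ψ k (N + 1) = ψ k N) ∧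
  (∀ k ≤ N - 1, ∀ x : ℕ, 1 ≤ x → x ≤ N →
    -(ψ k (x + 1) - 2 * ψ k x + ψ k (x - 1)) = (W k) ^ 2 * (m x * ψ k x)) ∧
  (∀ j ≤ N - 1, ∀ k ≤ N - 1,
    (∑ x ∈ Finset.Icc 1 N, m x * ψ j x * ψ k x) = if j = k then 1 else 0) ∧
  W 0 = 0 ∧ (∀ k : ℕ, 1 ≤ k → k ≤ N - 1 → 0 < W k)

-- The solution of `-Δp = l m p` with `p 0 = p 1 = 1`; every eigenvector is a multiple of it.
def freeSolution (l : ℝ) (m : ℕ → ℝ) : ℕ → ℝ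
  | 0 => 1
  | 1 => 1
  | x + 2 => (2 - l * m (x + 1)) * freeSolution l m (x + 1) - freeSolution l m x

lemma sum_Icc_one_eq_sum_fin {M : Type*} [AddCommMonoid M] (N : ℕ) (f : ℕ → M) :
    ∑ x ∈ Icc 1 N, f x = ∑ x : Fin N, f (x + 1) := by
  rw [Fin.sum_univ_eq_sum_range (fun x => f (x + 1)), range_eq_Ico, sum_Ico_add',
    Ico_add_one_right_eq_Icc, zero_add]

namespace IsEigenSystem

variable {N : ℕ} {m : ℕ → ℝ} {ψ : ℕ → ℕ → ℝ} {W : ℕ → ℝ} {k : ℕ}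

lemma apply_eq_mul_freeSolution (h : IsEigenSystem N m ψ W) (hk : k ≤ N - 1) :
    ∀ x ≤ N, ψ k x = ψ k 1 * freeSolution (W k ^ 2) m x := by
  intro x
  induction x using Nat.twoStepInduction with
  | zero => intro _; simp [freeSolution, (h.1 k hk).1]
  | one => intro _; simp [freeSolution]
  | more x ih₀ ih₁ =>
    intro hx
    have hrec := h.2.1 k hk (x + 1) (by omega) (by omega)
    rw [Nat.add_sub_cancel] at hrec
    rw [freeSolution, mul_sub, ← ih₀ (by omega), ← mul_assoc, mul_comm (ψ k 1),
      mul_assoc, ← ih₁ (by omega)]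
    linear_combination -hrec

lemma apply_one_sq_mul_sum (h : IsEigenSystem N m ψ W) (hk : k ≤ N - 1) :
    ψ k 1 ^ 2 * ∑ x ∈ Icc 1 N, m x * freeSolution (W k ^ 2) m x ^ 2 = 1 := by
  rw [mul_sum, ← (h.2.2.1 k hk k hk).trans (if_pos rfl)]
  refine sum_congr rfl fun x hx => ?_
  rw [h.apply_eq_mul_freeSolution hk x (mem_Icc.1 hx).2]
  ring

lemma mul_apply_eq_div (h : IsEigenSystem N m ψ W) (hk : k ≤ N - 1) {x y : ℕ}
    (hx : x ≤ N) (hy : y ≤ N) :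
    ψ k x * ψ k y = freeSolution (W k ^ 2) m x * freeSolution (W k ^ 2) m y /
      ∑ z ∈ Icc 1 N, m z * freeSolution (W k ^ 2) m z ^ 2 := by
  have hnorm := h.apply_one_sq_mul_sum hk
  have hS : ∑ z ∈ Icc 1 N, m z * freeSolution (W k ^ 2) m z ^ 2 ≠ 0 := by
    rintro hS; simp [hS] at hnorm
  rw [eq_div_iff hS, h.apply_eq_mul_freeSolution hk x hx, h.apply_eq_mul_freeSolution hk y hy]
  linear_combination freeSolution (W k ^ 2) m x * freeSolution (W k ^ 2) m y * hnorm

lemma sq_apply_le (h : IsEigenSystem N m ψ W) (hk : k ≤ N - 1) {mm : ℝ} (hmm : 0 < mm)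
    (hm : ∀ x, mm ≤ m x) {x : ℕ} (hx : x ∈ Icc 1 N) : ψ k x ^ 2 ≤ 1 / mm := by
  have hterm : m x * ψ k x * ψ k x ≤ 1 := by
    rw [← (h.2.2.1 k hk k hk).trans (if_pos rfl)]
    refine single_le_sum (f := fun i => m i * ψ k i * ψ k i) (fun i _ => ?_) hx
    nlinarith [hm i, mul_self_nonneg (ψ k i)]
  rw [le_div_iff₀ hmm]
  nlinarith [hm x, sq_nonneg (ψ k x)]

lemma abs_mul_apply_le (h : IsEigenSystem N m ψ W) (hk : k ≤ N - 1) {mm : ℝ} (hmm : 0 < mm)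
    (hm : ∀ x, mm ≤ m x) {x y : ℕ} (hx : x ∈ Icc 1 N) (hy : y ∈ Icc 1 N) :
    |ψ k x * ψ k y| ≤ 1 / mm := by
  have hx2 := h.sq_apply_le hk hmm hm hx
  have hy2 := h.sq_apply_le hk hmm hm hy
  rw [abs_mul]
  nlinarith [sq_abs (ψ k x), sq_abs (ψ k y), sq_nonneg (|ψ k x| - |ψ k y|)]

end IsEigenSystem

open SimpleGraph Matrix in
open scoped Classical in
lemma pathGraph_lapMatrix_mulVec {N : ℕ} {v : ℕ → ℝ} (hv0 : v 0 = v 1)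
    (hvN : v (N + 1) = v N) (i : Fin N) :
    ((pathGraph N).lapMatrix ℝ *ᵥ fun j => v (j + 1)) i =
      -(v (i + 2) - 2 * v (i + 1) + v i) := by
  obtain ⟨i, hi⟩ := i
  have hsplit : ∀ u : Fin N,
      (if (pathGraph N).Adj ⟨i, hi⟩ u then v (i + 1) - v (u + 1) else 0) =
      (if (u : ℕ) = i + 1 then v (i + 1) - v (u + 1) else 0) +
        (if (u : ℕ) + 1 = i then v (i + 1) - v (u + 1) else 0) := by
    intro u
    rw [pathGraph_adj]
    dsimp only
    split_ifs <;> first | omega | simp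
  have hright :
      (if i + 1 < N then v (i + 1) - v (i + 1 + 1) else 0) = v (i + 1) - v (i + 2) := by
    split_ifs with h
    · rfl
    · obtain rfl : N = i + 1 := by omega
      rw [hvN, sub_self]
  rw [lapMatrix_mulVec_apply, ← card_neighborFinset_eq_degree, ← nsmul_eq_mul, ← sum_const,
    ← sum_sub_distrib, neighborFinset_eq_filter, sum_filter, sum_congr rfl fun u _ => hsplit u,
    sum_add_distrib,
    Fin.sum_univ_eq_sum_range (fun u => if u = i + 1 then v (i + 1) - v (u + 1) else 0),
    Fin.sum_univ_eq_sum_range (fun u => if u + 1 = i then v (i + 1) - v (u + 1) else 0)]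
  simp only [sum_ite_eq', mem_range, hright]
  cases i with
  | zero =>
    simp only [Nat.add_eq_zero_iff, one_ne_zero, and_false, if_false, sum_const_zero, hv0]
    ring
  | succ j =>
    simp only [add_left_inj, sum_ite_eq', mem_range, if_pos (Nat.lt_of_succ_lt hi)]
    ring

-- Site `x + 1` is the index `x : Fin N`; with free boundary conditions `−Δ` is the Laplacian
-- of the path graph.
open scoped Classical in
noncomputable def invMassLaplacian (N : ℕ) (m : ℕ → ℝ) : Matrix (Fin N) (Fin N) ℝ :=
  Matrix.diagonal (fun x : Fin N => (m (x + 1))⁻¹) * (SimpleGraph.pathGraph N).lapMatrix ℝ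

open Matrix in
lemma IsEigenSystem.trace_invMassLaplacian_pow {N : ℕ} {m : ℕ → ℝ} {ψ : ℕ → ℕ → ℝ}
    {W : ℕ → ℝ} (h : IsEigenSystem N m ψ W) (hm : ∀ x, m x ≠ 0) (n : ℕ) :
    trace (invMassLaplacian N m ^ n) = ∑ k ∈ range N, (W k ^ 2) ^ n := by
  let Q : Matrix (Fin N) (Fin N) ℝ := of fun x k => ψ k (x + 1)
  let R : Matrix (Fin N) (Fin N) ℝ := of fun k x => m (x + 1) * ψ k (x + 1)
  let D : Matrix (Fin N) (Fin N) ℝ := diagonal fun k => W k ^ 2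
  have hRQ : R * Q = 1 := by
    ext j k
    have horth := h.2.2.1 j (by omega) k (by omega)
    rw [sum_Icc_one_eq_sum_fin] at horth
    simp only [mul_apply, one_apply, Fin.ext_iff, R, Q, of_apply, ← horth, mul_assoc]
  have hQD : SemiconjBy Q D (invMassLaplacian N m) := by
    ext x k
    have hk : (k : ℕ) ≤ N - 1 := by omega
    have hrow := pathGraph_lapMatrix_mulVec (h.1 k hk).1 (h.1 k hk).2 x
    have heig := h.2.1 k hk (x + 1) (by omega) (by omega)
    rw [Nat.add_sub_cancel, add_assoc, one_add_one_eq_two, ← hrow] at heig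
    rw [invMassLaplacian, Matrix.mul_assoc, diagonal_mul, mul_diagonal]
    change ψ k (x + 1) * W k ^ 2 = (m (x + 1))⁻¹ * (_ *ᵥ fun j : Fin N => ψ k (j + 1)) x
    rw [heig]
    field_simp [hm]
  have hpow : invMassLaplacian N m ^ n = Q * D ^ n * R := by
    rw [← Matrix.mul_one (_ ^ n), ← mul_eq_one_comm.1 hRQ, ← Matrix.mul_assoc,
      (hQD.pow_right n).eq]
  rw [hpow, trace_mul_comm, ← Matrix.mul_assoc, hRQ, Matrix.one_mul, diagonal_pow,
    trace_diagonal]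
  exact Fin.sum_univ_eq_sum_range (fun k => (W k ^ 2) ^ n) N

open Topology in
lemma tendsto_sum_pow_rpow_inv {ι : Type*} {s : Finset ι} {f : ι → ℝ} {i₀ : ι}
    (hi₀ : i₀ ∈ s) (hf : ∀ i ∈ s, 0 ≤ f i ∧ f i ≤ f i₀) :
    Tendsto (fun n : ℕ => (∑ i ∈ s, f i ^ n) ^ (n⁻¹ : ℝ)) atTop (𝓝 (f i₀)) := by
  have hf₀ : 0 ≤ f i₀ := (hf i₀ hi₀).1
  have hlower : ∀ᶠ n : ℕ in atTop, f i₀ ≤ (∑ i ∈ s, f i ^ n) ^ (n⁻¹ : ℝ) := by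
    filter_upwards [eventually_ne_atTop 0] with n hn
    calc f i₀ = (f i₀ ^ n) ^ (n⁻¹ : ℝ) := (Real.pow_rpow_inv_natCast hf₀ hn).symm
      _ ≤ _ := by
        gcongr
        exact single_le_sum (f := fun i => f i ^ n) (fun i hi => pow_nonneg (hf i hi).1 n) hi₀
  have hupper : ∀ᶠ n : ℕ in atTop,
      (∑ i ∈ s, f i ^ n) ^ (n⁻¹ : ℝ) ≤ (#s : ℝ) ^ (n⁻¹ : ℝ) * f i₀ := by
    filter_upwards [eventually_ne_atTop 0] with n hn
    calc (∑ i ∈ s, f i ^ n) ^ (n⁻¹ : ℝ) ≤ (#s * f i₀ ^ n) ^ (n⁻¹ : ℝ) := by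
          gcongr
          · exact sum_nonneg fun i hi => pow_nonneg (hf i hi).1 n
          · rw [← nsmul_eq_mul]
            exact sum_le_card_nsmul _ _ _ fun i hi =>
              pow_le_pow_left₀ (hf i hi).1 (hf i hi).2 n
      _ = (#s : ℝ) ^ (n⁻¹ : ℝ) * f i₀ := by
        rw [Real.mul_rpow (by positivity) (by positivity), Real.pow_rpow_inv_natCast hf₀ hn]
  have hcard : Tendsto (fun n : ℕ => (#s : ℝ) ^ (n⁻¹ : ℝ) * f i₀) atTop (𝓝 (f i₀)) := by
    have h := ((tendsto_const_nhds (x := (#s : ℝ))).rpow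
      (tendsto_inv_atTop_zero.comp tendsto_natCast_atTop_atTop)
      (Or.inl (Nat.cast_ne_zero.2 (card_ne_zero_of_mem hi₀)))).mul_const (f i₀)
    simpa using h
  exact tendsto_of_tendsto_of_tendsto_of_le_of_le' tendsto_const_nhds hcard hlower hupper

section Measurability

variable {Ω : Type*} [MeasurableSpace Ω]

lemma measurable_apply_of_measurable_sum_range_succ_pow {l : Ω → ℕ → ℝ} {j : ℕ}
    (hl : ∀ ω, ∀ i ≤ j, 0 ≤ l ω i ∧ l ω i ≤ l ω j)
    (hsum : ∀ n : ℕ, Measurable fun ω => ∑ i ∈ range (j + 1), l ω i ^ n) :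
    Measurable fun ω => l ω j :=
  measurable_of_tendsto_metrizable (fun n => (hsum n).pow_const _) <|
    tendsto_pi_nhds.2 fun ω => tendsto_sum_pow_rpow_inv (self_mem_range_succ j) fun i hi =>
      hl ω i (mem_range_succ_iff.1 hi)

lemma measurable_apply_of_measurable_sum_pow {N : ℕ} {l : Ω → ℕ → ℝ}
    (hl0 : ∀ ω i, 0 ≤ l ω i) (hmono : ∀ ω i j, i ≤ j → j < N → l ω i ≤ l ω j)
    (hsum : ∀ n : ℕ, Measurable fun ω => ∑ i ∈ range N, l ω i ^ n) {k : ℕ} (hk : k < N) :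
    Measurable fun ω => l ω k := by
  have hsum' : ∀ j ≤ N, ∀ n : ℕ, Measurable fun ω => ∑ i ∈ range j, l ω i ^ n := by
    intro j hj
    induction hj using Nat.decreasingInduction with
    | self => exact hsum
    | of_succ j hj ih =>
      have hlj := measurable_apply_of_measurable_sum_range_succ_pow
        (fun ω i hi => ⟨hl0 ω i, hmono ω i j hi hj⟩) ih
      intro n
      simpa only [Pi.sub_def, sum_range_succ, add_sub_cancel_right] using
        (ih n).sub (hlj.pow_const n)
  exact measurable_apply_of_measurable_sum_range_succ_pow
    (fun ω i hi => ⟨hl0 ω i, hmono ω i k hi hk⟩) (hsum' (k + 1) hk)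

variable {N : ℕ} {m : ℕ → Ω → ℝ}

open scoped Classical in
lemma measurable_invMassLaplacian_pow_apply (hm : ∀ i, Measurable (m i)) (n : ℕ)
    (x y : Fin N) : Measurable fun ω => (invMassLaplacian N (fun i => m i ω) ^ n) x y := by
  have hA : ∀ ω (j z : Fin N), invMassLaplacian N (fun i => m i ω) j z =
      (m (j + 1) ω)⁻¹ * (SimpleGraph.pathGraph N).lapMatrix ℝ j z := fun _ _ _ =>
    Matrix.diagonal_mul _ _ _ _
  induction n generalizing y with
  | zero => simp only [pow_zero]; exact measurable_const
  | succ n ih =>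
    simp only [pow_succ, Matrix.mul_apply, hA]
    exact Finset.measurable_sum _ fun j _ => (ih j).mul ((hm _).inv.mul_const _)

lemma measurable_freeSolution {l : Ω → ℝ} (hl : Measurable l) (hm : ∀ i, Measurable (m i))
    (x : ℕ) : Measurable fun ω => freeSolution (l ω) (fun i => m i ω) x := by
  induction x using Nat.twoStepInduction with
  | zero => exact measurable_const
  | one => exact measurable_const
  | more x ih₀ ih₁ =>
    exact ((measurable_const.sub (hl.mul (hm _))).mul ih₁).sub ih₀

variable {ψ : Ω → ℕ → ℕ → ℝ} {W : Ω → ℕ → ℝ}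

lemma measurable_eigenfrequency_sq (hm : ∀ i, Measurable (m i)) (hm0 : ∀ i ω, m i ω ≠ 0)
    (heig : ∀ ω, IsEigenSystem N (fun x => m x ω) (ψ ω) (W ω))
    (hsort : ∀ ω j k, j ≤ k → k ≤ N - 1 → W ω j ≤ W ω k) {k : ℕ} (hk : k < N) :
    Measurable fun ω => W ω k ^ 2 := by
  refine measurable_apply_of_measurable_sum_pow (l := fun ω i => W ω i ^ 2)
    (fun ω i => sq_nonneg _) (fun ω i j hij hj => ?_) (fun n => ?_) hk
  · have hW0 : 0 ≤ W ω i := (heig ω).2.2.2.1 ▸ hsort ω 0 i (Nat.zero_le i) (by omega)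
    exact pow_le_pow_left₀ hW0 (hsort ω i j hij (by omega)) 2
  · simp_rw [← (heig _).trace_invMassLaplacian_pow (fun i => hm0 i _)]
    exact Finset.measurable_sum _ fun x _ => measurable_invMassLaplacian_pow_apply hm n x x

lemma measurable_mul_eigenvector_apply (hm : ∀ i, Measurable (m i)) (hm0 : ∀ i ω, m i ω ≠ 0)
    (heig : ∀ ω, IsEigenSystem N (fun x => m x ω) (ψ ω) (W ω))
    (hsort : ∀ ω j k, j ≤ k → k ≤ N - 1 → W ω j ≤ W ω k) {k x y : ℕ} (hk : k < N)
    (hx : x ≤ N) (hy : y ≤ N) : Measurable fun ω => ψ ω k x * ψ ω k y := by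
  have hp := measurable_freeSolution (measurable_eigenfrequency_sq hm hm0 heig hsort hk) hm
  rw [funext fun ω => (heig ω).mul_apply_eq_div (by omega) hx hy]
  exact ((hp x).mul (hp y)).div
    (Finset.measurable_sum _ fun z _ => (hm z).mul ((hp z).pow_const 2))

end Measurability

def HasDistantPeaks (R a : ℝ) (N : ℕ) (v : ℕ → ℝ) : Prop :=
  ∃ x ∈ Icc 1 N, ∃ y ∈ Icc 1 N, R < |(x : ℝ) - y| ∧ a < |v x| ∧ a < |v y|

namespace HasDistantPeaks

variable {R a : ℝ} {N : ℕ} {v : ℕ → ℝ}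

lemma exists_sq_le_abs_mul (h : HasDistantPeaks R a N v) (ha : 0 ≤ a) :
    ∃ x ∈ Icc 1 N, ∃ y ∈ Icc 1 N, R < |(x : ℝ) - y| ∧ a ^ 2 ≤ |v x * v y| := by
  obtain ⟨x, hx, y, hy, hxy, hax, hay⟩ := h
  refine ⟨x, hx, y, hy, hxy, ?_⟩
  rw [abs_mul, sq]
  exact mul_le_mul hax.le hay.le ha (abs_nonneg _)

lemma exists_center_of_not (h : ¬HasDistantPeaks R a N v) :
    ∃ x₀ : ℝ, ∀ x : ℕ, 1 ≤ x → x ≤ N → R < |(x : ℝ) - x₀| → |v x| ≤ a := by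
  by_cases hpeak : ∃ y ∈ Icc 1 N, a < |v y|
  · obtain ⟨y, hy, hay⟩ := hpeak
    refine ⟨y, fun x hx1 hxN hxy => not_lt.1 fun hax => h ?_⟩
    exact ⟨x, mem_Icc.2 ⟨hx1, hxN⟩, y, hy, hxy, hax, hay⟩
  · push Not at hpeak
    exact ⟨0, fun x hx1 hxN _ => hpeak x (mem_Icc.2 ⟨hx1, hxN⟩)⟩

end HasDistantPeaks

section Probability

variable {Ω : Type*} [MeasurableSpace Ω] {μ : Measure Ω} [IsFiniteMeasure μ]

lemma integrable_sum_abs_mul_eigenvector_apply {N : ℕ} {m : ℕ → Ω → ℝ}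
    {ψ : Ω → ℕ → ℕ → ℝ} {W : Ω → ℕ → ℝ} (hm : ∀ i, Measurable (m i)) {mm : ℝ} (hmm : 0 < mm)
    (hmm_le : ∀ i ω, mm ≤ m i ω) (heig : ∀ ω, IsEigenSystem N (fun x => m x ω) (ψ ω) (W ω))
    (hsort : ∀ ω j k, j ≤ k → k ≤ N - 1 → W ω j ≤ W ω k) {s : Finset ℕ} (hs : ∀ k ∈ s, k < N)
    {x y : ℕ} (hx : x ∈ Icc 1 N) (hy : y ∈ Icc 1 N) :
    Integrable (fun ω => ∑ k ∈ s, |ψ ω k x * ψ ω k y|) μ := by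
  refine integrable_finsetSum s fun k hk =>
    Integrable.of_bound ?_ (1 / mm) (ae_of_all _ fun ω => ?_)
  · exact (measurable_mul_eigenvector_apply hm (fun i ω => (hmm.trans_le (hmm_le i ω)).ne') heig
      hsort (hs k hk) (mem_Icc.1 hx).2 (mem_Icc.1 hy).2).abs.aestronglyMeasurable
  · rw [Real.norm_eq_abs, abs_abs]
    exact (heig ω).abs_mul_apply_le (Nat.le_sub_one_of_lt (hs k hk)) hmm (fun i => hmm_le i ω)
      hx hy

lemma measure_exists_far_pair_le {N : ℕ} {R ε B : ℝ} (hε : 0 < ε) {g : ℕ → ℕ → Ω → ℝ}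
    (hg0 : ∀ x y ω, 0 ≤ g x y ω) (hgi : ∀ x ∈ Icc 1 N, ∀ y ∈ Icc 1 N, Integrable (g x y) μ)
    (hgB : ∀ x ∈ Icc 1 N, ∀ y ∈ Icc 1 N, R < |(x : ℝ) - y| → ∫ ω, g x y ω ∂μ ≤ B) :
    μ {ω | ∃ x ∈ Icc 1 N, ∃ y ∈ Icc 1 N, R < |(x : ℝ) - y| ∧ ε ≤ g x y ω} ≤
      ENNReal.ofReal (N ^ 2 * (B / ε)) := by
  classical
  let P := (Icc 1 N ×ˢ Icc 1 N).filter fun p : ℕ × ℕ => R < |(p.1 : ℝ) - p.2|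
  have hmarkov : ∀ p ∈ P, μ {ω | ε ≤ g p.1 p.2 ω} ≤ ENNReal.ofReal (B / ε) := by
    intro p hp
    simp only [P, mem_filter, mem_product] at hp
    rw [← ofReal_measureReal]
    refine ENNReal.ofReal_le_ofReal ((le_div_iff₀' hε).2 ?_)
    exact (mul_meas_ge_le_integral_of_nonneg (ae_of_all _ (hg0 _ _)) (hgi _ hp.1.1 _ hp.1.2)
      ε).trans (hgB _ hp.1.1 _ hp.1.2 hp.2)
  have hP : #P ≤ N ^ 2 := by
    refine (card_filter_le _ _).trans ?_
    rw [card_product, Nat.card_Icc, Nat.add_sub_cancel, sq]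
  calc μ {ω | ∃ x ∈ Icc 1 N, ∃ y ∈ Icc 1 N, R < |(x : ℝ) - y| ∧ ε ≤ g x y ω}
      ≤ μ (⋃ p ∈ P, {ω | ε ≤ g p.1 p.2 ω}) := by
        refine measure_mono fun ω ⟨x, hx, y, hy, hxy, hg⟩ =>
          Set.mem_biUnion (x := (x, y)) ?_ hg
        simp only [P, coe_filter, mem_product]
        exact ⟨⟨hx, hy⟩, hxy⟩
    _ ≤ ∑ p ∈ P, μ {ω | ε ≤ g p.1 p.2 ω} := measure_biUnion_finset_le _ _
    _ ≤ #P • ENNReal.ofReal (B / ε) := sum_le_card_nsmul _ _ _ hmarkov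
    _ ≤ (N ^ 2 : ℕ) • ENNReal.ofReal (B / ε) := by gcongr
    _ = ENNReal.ofReal (N ^ 2 * (B / ε)) := by
        rw [nsmul_eq_mul, ENNReal.ofReal_mul (by positivity), ← ENNReal.ofReal_natCast]
        push_cast
        rfl

lemma measure_exists_hasDistantPeaks_le {N : ℕ} {m : ℕ → Ω → ℝ} {ψ : Ω → ℕ → ℕ → ℝ}
    {W : Ω → ℕ → ℝ} (hm : ∀ i, Measurable (m i)) {mm : ℝ} (hmm : 0 < mm)
    (hmm_le : ∀ i ω, mm ≤ m i ω) (heig : ∀ ω, IsEigenSystem N (fun x => m x ω) (ψ ω) (W ω))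
    (hsort : ∀ ω j k, j ≤ k → k ≤ N - 1 → W ω j ≤ W ω k) {s : Finset ℕ} (hs : ∀ k ∈ s, k < N)
    {R a B : ℝ} (ha : 0 < a)
    (hB : ∀ x ∈ Icc 1 N, ∀ y ∈ Icc 1 N, R < |(x : ℝ) - y| →
      ∫ ω, ∑ k ∈ s, |ψ ω k x * ψ ω k y| ∂μ ≤ B) :
    μ {ω | ∃ k ∈ s, HasDistantPeaks R a N (ψ ω k)} ≤ ENNReal.ofReal (N ^ 2 * (B / a ^ 2)) := by
  calc μ {ω | ∃ k ∈ s, HasDistantPeaks R a N (ψ ω k)}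
      ≤ μ {ω | ∃ x ∈ Icc 1 N, ∃ y ∈ Icc 1 N, R < |(x : ℝ) - y| ∧
          a ^ 2 ≤ ∑ k ∈ s, |ψ ω k x * ψ ω k y|} := by
        refine measure_mono fun ω ⟨k, hk, hpeaks⟩ => ?_
        obtain ⟨x, hx, y, hy, hxy, hle⟩ := hpeaks.exists_sq_le_abs_mul ha.le
        exact ⟨x, hx, y, hy, hxy, hle.trans
          (single_le_sum (f := fun j => |ψ ω j x * ψ ω j y|) (fun _ _ => abs_nonneg _) hk)⟩
    _ ≤ _ := measure_exists_far_pair_le (by positivity)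
        (fun _ _ _ => sum_nonneg fun _ _ => abs_nonneg _)
        (fun x hx y hy =>
          integrable_sum_abs_mul_eigenvector_apply hm hmm hmm_le heig hsort hs hx hy)
        hB

end Probability

open Topology Asymptotics in
lemma summable_rpow_mul_exp_neg_mul_rpow (p : ℝ) {c δ : ℝ} (hc : 0 < c) (hδ : 0 < δ) :
    Summable fun n : ℕ => (n : ℝ) ^ p * Real.exp (-c * n ^ δ) := by
  have hlim :
      Tendsto (fun n : ℕ => (n : ℝ) ^ (p + 2) * Real.exp (-c * n ^ δ)) atTop (𝓝 0) := by
    refine ((isLittleO_rpow_exp_pos_mul_atTop ((p + 2) / δ) hc).tendsto_div_nhds_zero.comp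
      ((tendsto_rpow_atTop hδ).comp tendsto_natCast_atTop_atTop)).congr fun n => ?_
    rw [Function.comp_apply, Function.comp_apply, ← Real.rpow_mul (Nat.cast_nonneg n),
      mul_div_cancel₀ _ hδ.ne', div_eq_mul_inv, ← Real.exp_neg, neg_mul]
  refine summable_of_isBigO_nat (Real.summable_nat_rpow_inv.2 one_lt_two)
    (((hlim.isBigO_one ℝ).mul (isBigO_refl (fun n : ℕ => ((n : ℝ) ^ (2 : ℝ))⁻¹) atTop)).congr'
      ?_ (by simp))
  filter_upwards [eventually_ne_atTop 0] with n hn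
  rw [Real.rpow_add (by positivity)]
  field_simp

lemma exp_neg_mul_div_rpow_le {c γ β d x : ℝ} (hc : 0 < c) (hx : 0 < x) (hd : x ^ γ < d) :
    Real.exp (-c * d / x ^ β) ≤ Real.exp (-c * x ^ (γ - β)) := by
  rw [Real.exp_le_exp, Real.rpow_sub hx, neg_mul, neg_mul, neg_div, neg_le_neg_iff,
    mul_div_assoc]
  gcongr

open scoped Classical in
theorem stmt17_general
    {Ω : Type*} [MeasurableSpace Ω] (μ : Measure Ω) [IsProbabilityMeasure μ]
    (mminus mplus : ℝ) (hm0 : 0 < mminus)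
    (m : ℕ → Ω → ℝ) (hmeas : ∀ i, Measurable (m i))
    (hbdd : ∀ i ω, m i ω ∈ Set.Icc mminus mplus)
    -- the (random) eigenmodes, sorted by increasing eigenfrequency
    (ψ : (N : ℕ) → Ω → ℕ → ℕ → ℝ) (W : (N : ℕ) → Ω → ℕ → ℝ)
    (heigen : ∀ N : ℕ, 2 ≤ N → ∀ ω, IsEigenSystem N (fun x => m x ω) (ψ N ω) (W N ω))
    (hsorted : ∀ N : ℕ, 2 ≤ N → ∀ ω, ∀ j k : ℕ, j ≤ k → k ≤ N - 1 → W N ω j ≤ W N ω k)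
    (α γ : ℝ) (hγ1 : 2 * α < γ)
    (C c : ℝ) (hC : 0 < C) (hc : 0 < c)
    (hloc : ∀ N : ℕ, 2 ≤ N → ∀ x ∈ Finset.Icc 1 N, ∀ y ∈ Finset.Icc 1 N,
      (∫ ω, (∑ k ∈ (Finset.Icc 1 (N - 1)).filter
          (fun k : ℕ => (N : ℝ) ^ ((1 : ℝ) - α) < (k : ℝ)),
        |ψ N ω k x * ψ N ω k y|) ∂μ)
        ≤ C * Real.exp (-c * |(x : ℝ) - (y : ℝ)| / (N : ℝ) ^ (2 * α))) :
    ∀ᵐ ω ∂μ, ∃ N₀ : ℕ, ∀ N : ℕ, N₀ ≤ N →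
      ∀ k ∈ (Finset.Icc 1 (N - 1)).filter
          (fun k : ℕ => (N : ℝ) ^ ((1 : ℝ) - α) < (k : ℝ)),
        ∃ x₀ : ℝ, ∀ x : ℕ, 1 ≤ x → x ≤ N → (N : ℝ) ^ γ < |(x : ℝ) - x₀| →
          |ψ N ω k x| ≤ (N : ℝ) ^ (-(1 : ℝ) / γ) := by
  set I : ℕ → Finset ℕ := fun N => (Icc 1 (N - 1)).filter
    fun k : ℕ => (N : ℝ) ^ ((1 : ℝ) - α) < (k : ℝ)
  have hI : ∀ N, ∀ k ∈ I N, 1 ≤ k ∧ k < N := fun N k hk => by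
    have hk' := mem_Icc.1 (mem_filter.1 hk).1; omega
  let E : ℕ → Set Ω := fun N =>
    {ω | ∃ k ∈ I N, HasDistantPeaks ((N : ℝ) ^ γ) ((N : ℝ) ^ (-(1 : ℝ) / γ)) N (ψ N ω k)}
  have hE : ∀ N, μ (E N) ≤
      ENNReal.ofReal (C * ((N : ℝ) ^ (2 + 2 / γ) * Real.exp (-c * N ^ (γ - 2 * α)))) := by
    intro N
    rcases lt_or_ge N 2 with hN | hN
    · have hempty : E N = ∅ := Set.eq_empty_of_forall_notMem fun ω ⟨k, hk, _⟩ => by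
        have hk' := hI N k hk; omega
      simp [hempty]
    have hN0 : (0 : ℝ) < N := by positivity
    calc μ (E N) ≤ ENNReal.ofReal (N ^ 2 * (C * Real.exp (-c * N ^ (γ - 2 * α)) /
          ((N : ℝ) ^ (-(1 : ℝ) / γ)) ^ 2)) :=
        measure_exists_hasDistantPeaks_le hmeas hm0 (fun i ω => (hbdd i ω).1) (heigen N hN)
          (hsorted N hN) (fun k hk => (hI N k hk).2) (by positivity)
          fun x hx y hy hxy => (hloc N hN x hx y hy).trans
            (mul_le_mul_of_nonneg_left (exp_neg_mul_div_rpow_le hc hN0 hxy) hC.le)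
      _ = _ := by
        have hpow : ((N : ℝ) ^ (-(1 : ℝ) / γ)) ^ 2 = ((N : ℝ) ^ (2 / γ))⁻¹ := by
          rw [← Real.rpow_natCast, ← Real.rpow_mul hN0.le, ← Real.rpow_neg hN0.le]
          congr 1
          ring
        rw [hpow, Real.rpow_add hN0, Real.rpow_two]
        field_simp
  have hsum : ∑' N, μ (E N) ≠ ⊤ :=
    ne_top_of_le_ne_top (ENNReal.tsum_coe_ne_top_iff_summable.2
      ((summable_rpow_mul_exp_neg_mul_rpow _ hc (by linarith)).mul_left C).toNNReal)
      (ENNReal.tsum_le_tsum hE)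
  filter_upwards [ae_eventually_notMem hsum] with ω hω
  obtain ⟨N₀, hN₀⟩ := eventually_atTop.1 hω
  exact ⟨N₀, fun N hN k hk =>
    HasDistantPeaks.exists_center_of_not fun h => hN₀ N hN ⟨k, hk, h⟩⟩

open scoped Classical in
/-- localization of the high modes.  Assuming the localization estimate
`𝖤( Σ_{k ∈ I(α)} |ψ^k_x ψ^k_y| ) ≤ C e^{−c|x−y|/N^{2α}}` with
`I(α) = (N^{1−α}, N−1] ∩ ℤ`, almost surely for all large `N` every mode `ψ^k`, `k ∈ I(α)`,
is bounded by `N^{−1/γ}` outside an interval of length `2N^γ`. -/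
theorem stmt17
    {Ω : Type*} [MeasurableSpace Ω] (μ : Measure Ω) [IsProbabilityMeasure μ]
    (mminus mplus : ℝ) (hm0 : 0 < mminus)
    (m : ℕ → Ω → ℝ) (hmeas : ∀ i, Measurable (m i))
    (hindep : iIndepFun m μ)
    (hident : ∀ i j, IdentDistrib (m i) (m j) μ μ)
    (hbdd : ∀ i ω, m i ω ∈ Set.Icc mminus mplus)
    -- the (random) eigenmodes, sorted by increasing eigenfrequency
    (ψ : (N : ℕ) → Ω → ℕ → ℕ → ℝ) (W : (N : ℕ) → Ω → ℕ → ℝ)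
    (heigen : ∀ N : ℕ, 2 ≤ N → ∀ ω, IsEigenSystem N (fun x => m x ω) (ψ N ω) (W N ω))
    (hsorted : ∀ N : ℕ, 2 ≤ N → ∀ ω, ∀ j k : ℕ, j ≤ k → k ≤ N - 1 → W N ω j ≤ W N ω k)
    (α γ : ℝ) (hα0 : 0 < α) (hα : α < 1 / 2) (hγ1 : 2 * α < γ) (hγ2 : γ < 1)
    (C c : ℝ) (hC : 0 < C) (hc : 0 < c)
    (hloc : ∀ N : ℕ, 2 ≤ N → ∀ x ∈ Finset.Icc 1 N, ∀ y ∈ Finset.Icc 1 N,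
      (∫ ω, (∑ k ∈ (Finset.Icc 1 (N - 1)).filter
          (fun k : ℕ => (N : ℝ) ^ ((1 : ℝ) - α) < (k : ℝ)),
        |ψ N ω k x * ψ N ω k y|) ∂μ)
        ≤ C * Real.exp (-c * |(x : ℝ) - (y : ℝ)| / (N : ℝ) ^ (2 * α))) :
    ∀ᵐ ω ∂μ, ∃ N₀ : ℕ, ∀ N : ℕ, N₀ ≤ N →
      ∀ k ∈ (Finset.Icc 1 (N - 1)).filter
          (fun k : ℕ => (N : ℝ) ^ ((1 : ℝ) - α) < (k : ℝ)),
        ∃ x₀ : ℝ, ∀ x : ℕ, 1 ≤ x → x ≤ N → (N : ℝ) ^ γ < |(x : ℝ) - x₀| →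
          |ψ N ω k x| ≤ (N : ℝ) ^ (-(1 : ℝ) / γ) :=
  stmt17_general μ mminus mplus hm0 m hmeas hbdd ψ W heigen hsorted α γ hγ1 C c hC hc hloc
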